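/- Under the hypotheses of the previous statement, for every θ > 0 the function H_θ(z) = (θ + H^{2/p}(z))^{p/2} satisfies λ̃(θ + H^{2/p}(z))^{(p-2)/2}|v|² ≤ (D²H_θ(z)v, v) ≤ Λ̃(θ + H^{2/p}(z))^{(p-2)/2}|v|², with λ̃, Λ̃ > 0 depending only on H and p but not on θ. -/

import Mathlib

/-!
Write `H_θ = f ∘ H` with `f(s) = (θ + s^{2/p})^{p/2}`. Away from the origin the Hessian is
`f''(H) ∇H ⊗ ∇H + f'(H) D²H`, and `s f''(s) / f'(s) = (2 - p)/p · θ/(θ + s^{2/p})` lies between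
`0` and `(2 - p)/p`. Euler's identities for the `p`-homogeneous `H` turn the Cauchy–Schwarz
inequality for the positive form `D²H(z)` into `(p - 1)(∇H·v)² ≤ p H (D²H v·v)`, so the rank-one
term changes `f'(H) (D²H v·v)` by a factor in `[1/p, p/(p - 1)]`. Finally `D²H(z) z·z = p(p-1) H(z)`
pins `H(z)/|z|^p` between `λ/(p(p-1))` and `Λ/(p(p-1))`, which makes `f'(H(z)) |z|^{p-2}`
comparable to `(θ + H^{2/p}(z))^{(p-2)/2}` uniformly in `θ`. At the origin only differentiability
of `∇H_θ` is known; along a ray the second derivative is a derivative, so by Darboux's theorem it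
inherits the bounds from the punctured neighbourhood.
-/

open Filter Topology Set InnerProductSpace
open scoped RealInnerProductSpace

noncomputable section

/-- `H_θ = regularizedPow p θ ∘ H`. -/
def regularizedPow (p θ s : ℝ) : ℝ := (θ + s ^ (2 / p)) ^ (p / 2)

def regularizedPowDeriv (p θ s : ℝ) : ℝ := (θ + s ^ (2 / p)) ^ ((p - 2) / 2) * s ^ ((2 - p) / p)

end

theorem le_deriv_of_tendsto_nhdsGT {φ φ' f : ℝ → ℝ} {a L : ℝ}
    (hφ : ∀ t, HasDerivAt φ (φ' t) t) (hf : Tendsto f (𝓝[>] a) (𝓝 L))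
    (hle : ∀ᶠ t in 𝓝[>] a, f t ≤ φ' t) : L ≤ φ' a := by
  by_contra! h
  obtain ⟨c, hac, hcL⟩ := exists_between h
  have hc : ∀ᶠ t in 𝓝[>] a, c < φ' t :=
    (hf.eventually (lt_mem_nhds hcL)).mp (hle.mono fun _ h1 h2 => h2.trans_le h1)
  obtain ⟨u, hau, hsub⟩ := mem_nhdsGT_iff_exists_Ioo_subset.mp hc
  have hmid : (a + u) / 2 ∈ Ioo a u := ⟨left_lt_add_div_two.2 hau, add_div_two_lt_right.2 hau⟩
  obtain ⟨ξ, hξ, hξc⟩ := exists_hasDerivWithinAt_eq_of_gt_of_lt hmid.1.le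
    (fun t _ => (hφ t).hasDerivWithinAt) hac (hsub hmid)
  exact (hsub ⟨hξ.1, hξ.2.trans hmid.2⟩).ne' hξc

theorem deriv_le_of_tendsto_nhdsGT {φ φ' f : ℝ → ℝ} {a L : ℝ}
    (hφ : ∀ t, HasDerivAt φ (φ' t) t) (hf : Tendsto f (𝓝[>] a) (𝓝 L))
    (hle : ∀ᶠ t in 𝓝[>] a, φ' t ≤ f t) : φ' a ≤ L :=
  neg_le_neg_iff.mp <| le_deriv_of_tendsto_nhdsGT (φ := fun t => -φ t) (φ' := fun t => -φ' t)
    (fun t => (hφ t).neg) hf.neg (hle.mono fun _ h => neg_le_neg h)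

theorem rpow_mem_uIcc_of_mem_Icc {a b x : ℝ} (ha : 0 < a) (hx : x ∈ Icc a b) (e : ℝ) :
    x ^ e ∈ uIcc (a ^ e) (b ^ e) := by
  rcases le_total 0 e with he | he
  · exact Icc_subset_uIcc ⟨Real.rpow_le_rpow ha.le hx.1 he,
      Real.rpow_le_rpow (ha.le.trans hx.1) hx.2 he⟩
  · exact Icc_subset_uIcc' ⟨Real.rpow_le_rpow_of_nonpos (ha.trans_le hx.1) hx.2 he,
      Real.rpow_le_rpow_of_nonpos ha hx.1 he⟩

section RegularizedPow

variable {p θ s : ℝ}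

theorem hasDerivAt_regularizedPow (hp : p ≠ 0) (hθ : 0 ≤ θ) (hs : 0 < s) :
    HasDerivAt (regularizedPow p θ) (regularizedPowDeriv p θ s) s := by
  have hA : 0 < θ + s ^ (2 / p) := by positivity
  have hinner := (Real.hasDerivAt_rpow_const (p := 2 / p) (Or.inl hs.ne')).const_add θ
  refine (hinner.rpow_const (p := p / 2) (Or.inl hA.ne')).congr_deriv ?_
  rw [regularizedPowDeriv, show (p - 2) / 2 = p / 2 - 1 by ring,
    show (2 - p) / p = 2 / p - 1 by field_simp, Real.rpow_sub_one hA.ne', Real.rpow_sub_one hs.ne']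
  field_simp

theorem hasDerivAt_regularizedPowDeriv (hθ : 0 ≤ θ) (hs : 0 < s) :
    HasDerivAt (regularizedPowDeriv p θ)
      ((2 - p) / p * (θ / (θ + s ^ (2 / p))) * regularizedPowDeriv p θ s / s) s := by
  have hA : 0 < θ + s ^ (2 / p) := by positivity
  have hinner := (Real.hasDerivAt_rpow_const (p := 2 / p) (Or.inl hs.ne')).const_add θ
  refine ((hinner.rpow_const (p := (p - 2) / 2) (Or.inl hA.ne')).mul
    (Real.hasDerivAt_rpow_const (p := (2 - p) / p) (Or.inl hs.ne'))).congr_deriv ?_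
  simp only [regularizedPowDeriv, Real.rpow_sub_one hA.ne', Real.rpow_sub_one hs.ne']
  field_simp
  ring

theorem regularizedPowDeriv_mul_rpow {n : ℝ} (hp : p ≠ 0) (hs : 0 < s) (hn : 0 < n) :
    regularizedPowDeriv p θ s * n ^ (p - 2) =
      (θ + s ^ (2 / p)) ^ ((p - 2) / 2) * (s / n ^ p) ^ ((2 - p) / p) := by
  rw [regularizedPowDeriv, Real.div_rpow hs.le (by positivity), ← Real.rpow_mul hn.le,
    show p * ((2 - p) / p) = -(p - 2) by field_simp; ring, Real.rpow_neg hn.le]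
  field_simp

end RegularizedPow

/-- The Hessian form `b x + a B = f'' (∇H·v)² + f' (D²H v·v)` of `f ∘ H`, with
`p s f''(s) = (2 - p) τ f'(s)` and the Cauchy–Schwarz bound `(p - 1)(∇H·v)² ≤ p s (D²H v·v)`. -/
theorem mul_add_mul_bounds {p s a b x B τ : ℝ} (hp : 1 < p) (hs : 0 < s) (ha : 0 ≤ a)
    (hτ : τ ∈ Icc (0 : ℝ) 1) (hB : 0 ≤ B) (hx0 : 0 ≤ x) (hx : (p - 1) * x ≤ p * s * B)
    (hb : p * s * b = (2 - p) * τ * a) :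
    a * B / p ≤ b * x + a * B ∧ b * x + a * B ≤ p / (p - 1) * (a * B) := by
  have hp1 : 0 < p - 1 := by linarith
  have hps : 0 < p * s := by positivity
  have haB : 0 ≤ a * B := mul_nonneg ha hB
  have hτaB : τ * (a * B) ≤ a * B := mul_le_of_le_one_left haB hτ.2
  have hsb : p * s * ((p - 1) * (b * x)) = (2 - p) * τ * a * ((p - 1) * x) := by
    rw [← hb]; ring
  have hsB : p * s * ((2 - p) * τ * (a * B)) = (2 - p) * τ * a * (p * s * B) := by ring
  have hsx : p * s * (b * x) = (2 - p) * τ * a * x := by rw [← hb]; ring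
  rw [div_le_iff₀ (by linarith), div_mul_eq_mul_div, le_div_iff₀ hp1]
  rcases le_or_gt p 2 with h2 | h2
  · have hc : 0 ≤ (2 - p) * τ * a := mul_nonneg (mul_nonneg (by linarith) hτ.1) ha
    have hbx : 0 ≤ b * x := nonneg_of_mul_nonneg_right (by rw [hsx]; positivity) hps
    have hcore : (p - 1) * (b * x) ≤ (2 - p) * τ * (a * B) := by
      refine le_of_mul_le_mul_left ?_ hps
      rw [hsb, hsB]; exact mul_le_mul_of_nonneg_left hx hc
    constructor <;> nlinarith
  · have hc : (2 - p) * τ * a ≤ 0 :=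
      mul_nonpos_of_nonpos_of_nonneg (mul_nonpos_of_nonpos_of_nonneg (by linarith) hτ.1) ha
    have hbx : b * x ≤ 0 :=
      nonpos_of_mul_nonpos_right (by rw [hsx]; exact mul_nonpos_of_nonpos_of_nonneg hc hx0) hps
    have hcore : (2 - p) * τ * (a * B) ≤ (p - 1) * (b * x) := by
      refine le_of_mul_le_mul_left ?_ hps
      rw [hsb, hsB]; exact mul_le_mul_of_nonpos_left hx hc
    have hτ' : (2 - p) * (a * B) ≤ (2 - p) * τ * (a * B) := by nlinarith
    constructor <;> nlinarith

theorem apply_zero_of_homogeneous {F : Type*} [AddCommGroup F] [Module ℝ F] {H : F → ℝ} {p : ℝ}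
    (hp : 0 < p) (hhom : ∀ t > (0:ℝ), ∀ z, H (t • z) = t ^ p * H z) : H 0 = 0 := by
  have h := hhom 2 two_pos 0
  rw [smul_zero] at h
  have h2 : (1 : ℝ) < 2 ^ p := Real.one_lt_rpow one_lt_two hp
  nlinarith

theorem continuousAt_zero_rpow_add_rpow_of_homogeneous {F : Type*} [AddCommGroup F] [Module ℝ F]
    [TopologicalSpace F] {H : F → ℝ} {p θ : ℝ} (r : ℝ) (hp : 0 < p) (hθ : 0 < θ)
    (hH : Continuous H) (hhom : ∀ t > (0:ℝ), ∀ z, H (t • z) = t ^ p * H z) :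
    ContinuousAt (fun y => (θ + H y ^ (2 / p)) ^ r) 0 := by
  refine (continuousAt_const.add
    (hH.continuousAt.rpow_const (Or.inr (by positivity)))).rpow_const (Or.inl ?_)
  show θ + H 0 ^ (2 / p) ≠ 0
  rw [apply_zero_of_homogeneous hp hhom, Real.zero_rpow (by positivity)]
  positivity

variable {E : Type*} [NormedAddCommGroup E] [InnerProductSpace ℝ E]

theorem inner_map_add_inner_map_sq_le {T : E →L[ℝ] E} (hT : ∀ u, 0 ≤ ⟪T u, u⟫) (x y : E) :
    (⟪T x, y⟫ + ⟪T y, x⟫) ^ 2 ≤ 4 * ⟪T x, x⟫ * ⟪T y, y⟫ := by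
  have hquad : ∀ t : ℝ, 0 ≤ ⟪T y, y⟫ * (t * t) + (⟪T x, y⟫ + ⟪T y, x⟫) * t + ⟪T x, x⟫ := by
    intro t
    have := hT (x + t • y)
    simp only [map_add, map_smul, inner_add_left, inner_add_right, real_inner_smul_left,
      real_inner_smul_right] at this
    linarith
  have := discrim_le_zero hquad
  rw [discrim] at this
  linarith

theorem inner_fderiv_bounds_of_forall_ne {g : E → E} {l u : E → ℝ} {x v : E}
    (hg : Differentiable ℝ g) (hv : v ≠ 0) (hl : ContinuousAt l x) (hu : ContinuousAt u x)
    (h : ∀ y ≠ x, l y ≤ ⟪fderiv ℝ g y v, v⟫ ∧ ⟪fderiv ℝ g y v, v⟫ ≤ u y) :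
    l x ≤ ⟪fderiv ℝ g x v, v⟫ ∧ ⟪fderiv ℝ g x v, v⟫ ≤ u x := by
  have hray : ∀ t : ℝ, HasDerivAt (fun s : ℝ => ⟪g (x + s • v), v⟫)
      ⟪fderiv ℝ g (x + t • v) v, v⟫ t := by
    intro t
    have := (hg _).hasFDerivAt.comp_hasDerivAt t (((hasDerivAt_id t).smul_const v).const_add x)
    simpa using this.inner ℝ (hasDerivAt_const t v)
  have hlim : Tendsto (fun t : ℝ => x + t • v) (𝓝[>] 0) (𝓝 x) := by
    have : Continuous (fun t : ℝ => x + t • v) := by fun_prop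
    simpa using (this.tendsto 0).mono_left nhdsWithin_le_nhds
  have hbd : ∀ᶠ t in 𝓝[>] (0:ℝ), l (x + t • v) ≤ ⟪fderiv ℝ g (x + t • v) v, v⟫ ∧
      ⟪fderiv ℝ g (x + t • v) v, v⟫ ≤ u (x + t • v) := by
    filter_upwards [self_mem_nhdsWithin] with t ht
    exact h _ (by simpa using smul_ne_zero (ne_of_gt (mem_Ioi.mp ht)) hv)
  constructor
  · simpa using le_deriv_of_tendsto_nhdsGT hray (hl.tendsto.comp hlim) (hbd.mono fun _ h => h.1)
  · simpa using deriv_le_of_tendsto_nhdsGT hray (hu.tendsto.comp hlim) (hbd.mono fun _ h => h.2)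

variable [CompleteSpace E]

theorem HasDerivAt.hasGradientAt_comp {f : ℝ → ℝ} {f' : ℝ} {H : E → ℝ} {y : E}
    (hf : HasDerivAt f f' (H y)) (hH : DifferentiableAt ℝ H y) :
    HasGradientAt (fun w => f (H w)) (f' • gradient H y) y := by
  rw [hasGradientAt_iff_hasFDerivAt, map_smul, toDual_gradient]
  exact hf.comp_hasFDerivAt y hH.hasFDerivAt

theorem inner_fderiv_gradient_comp {f f' : ℝ → ℝ} {f'' : ℝ} {H : E → ℝ} {z : E}
    (hf : ∀ᶠ s in 𝓝 (H z), HasDerivAt f (f' s) s) (hf' : HasDerivAt f' f'' (H z))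
    (hH : ∀ᶠ y in 𝓝 z, DifferentiableAt ℝ H y) (hd : DifferentiableAt ℝ (gradient H) z)
    (v : E) :
    ⟪fderiv ℝ (gradient fun y => f (H y)) z v, v⟫ =
      f'' * ⟪gradient H z, v⟫ ^ 2 + f' (H z) * ⟪fderiv ℝ (gradient H) z v, v⟫ := by
  have hHz := hH.self_of_nhds
  have hgrad : gradient (fun y => f (H y)) =ᶠ[𝓝 z] fun y => f' (H y) • gradient H y := by
    filter_upwards [hH, hHz.continuousAt.tendsto.eventually hf] with y hHy hfy
    exact (hfy.hasGradientAt_comp hHy).gradient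
  have hprod : HasFDerivAt (fun y => f' (H y) • gradient H y) _ z :=
    (hf'.comp_hasFDerivAt z hHz.hasFDerivAt).smul hd.hasFDerivAt
  rw [hgrad.fderiv_eq, hprod.fderiv]
  simp only [add_apply, smul_apply, ContinuousLinearMap.smulRight_apply, Function.comp_apply,
    smul_eq_mul, inner_add_left, real_inner_smul_left, ← inner_gradient_left]
  ring

theorem inner_fderiv_gradient_comm {H : E → ℝ} {z : E} (hH : Differentiable ℝ H)
    (hd : DifferentiableAt ℝ (gradient H) z) (u w : E) :
    ⟪fderiv ℝ (gradient H) z u, w⟫ = ⟪fderiv ℝ (gradient H) z w, u⟫ := by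
  have hD : HasFDerivAt (fderiv ℝ H)
      ((toDual ℝ E).toContinuousLinearEquiv.toContinuousLinearMap.comp
        (fderiv ℝ (gradient H) z)) z := by
    rw [← toDual_comp_gradient]
    exact (toDual ℝ E).toContinuousLinearEquiv.toContinuousLinearMap.hasFDerivAt.comp z
      hd.hasFDerivAt
  simpa only [ContinuousLinearMap.comp_apply, ContinuousLinearEquiv.coe_coe,
    LinearIsometryEquiv.coe_toContinuousLinearEquiv, toDual_apply_apply] using
    second_derivative_symmetric (fun y => (hH y).hasFDerivAt) hD u w

section Homogeneous

variable {p : ℝ} {H : E → ℝ}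

theorem inner_gradient_self_of_homogeneous {z : E} (hH : DifferentiableAt ℝ H z)
    (hhom : ∀ t > (0:ℝ), H (t • z) = t ^ p * H z) : ⟪gradient H z, z⟫ = p * H z := by
  have hray : HasDerivAt (fun t : ℝ => H (t • z)) (fderiv ℝ H z z) 1 := by
    have hline : HasDerivAt (fun t : ℝ => t • z) z 1 := by
      simpa using (hasDerivAt_id (1:ℝ)).smul_const z
    have hH1 : HasFDerivAt H (fderiv ℝ H z) ((1:ℝ) • z) := by rw [one_smul]; exact hH.hasFDerivAt
    exact hH1.comp_hasDerivAt 1 hline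
  have hpow : HasDerivAt (fun t : ℝ => t ^ p * H z) (p * H z) 1 := by
    simpa using (Real.hasDerivAt_rpow_const (x := 1) (p := p) (Or.inl one_ne_zero)).mul_const (H z)
  have heq : (fun t : ℝ => H (t • z)) =ᶠ[𝓝 1] fun t => t ^ p * H z :=
    (eventually_gt_nhds one_pos).mono hhom
  rw [inner_gradient_left, hray.unique (hpow.congr_of_eventuallyEq heq)]

/-- The derivative of Euler's identity `⟪∇H y, y⟫ = p H y`. -/
theorem inner_fderiv_gradient_self_of_homogeneous (hH : Differentiable ℝ H)
    (hhom : ∀ t > (0:ℝ), ∀ z, H (t • z) = t ^ p * H z) {z : E}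
    (hd : DifferentiableAt ℝ (gradient H) z) (v : E) :
    ⟪fderiv ℝ (gradient H) z v, z⟫ = (p - 1) * ⟪gradient H z, v⟫ := by
  have heuler : (fun y => ⟪gradient H y, y⟫) = fun y => p * H y :=
    funext fun y => inner_gradient_self_of_homogeneous (hH y) (fun t ht => hhom t ht y)
  have hlhs : HasFDerivAt (fun y => ⟪gradient H y, y⟫) _ z :=
    hd.hasFDerivAt.inner ℝ (hasFDerivAt_id z)
  rw [heuler] at hlhs
  have := congrArg (fun L : E →L[ℝ] ℝ => L v) (hlhs.unique ((hH z).hasFDerivAt.const_mul p))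
  simp only [ContinuousLinearMap.comp_apply, ContinuousLinearMap.prod_apply,
    ContinuousLinearMap.id_apply, fderivInnerCLM_apply, smul_apply, ← inner_gradient_left,
    smul_eq_mul] at this
  linarith

theorem sq_inner_gradient_le_of_homogeneous (hp : 1 < p) (hH : Differentiable ℝ H)
    (hhom : ∀ t > (0:ℝ), ∀ z, H (t • z) = t ^ p * H z) {z : E}
    (hd : DifferentiableAt ℝ (gradient H) z)
    (hpos : ∀ u, 0 ≤ ⟪fderiv ℝ (gradient H) z u, u⟫) (v : E) :
    (p - 1) * ⟪gradient H z, v⟫ ^ 2 ≤ p * H z * ⟪fderiv ℝ (gradient H) z v, v⟫ := by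
  have hcs := inner_map_add_inner_map_sq_le hpos z v
  rw [inner_fderiv_gradient_comm hH hd z v, inner_fderiv_gradient_self_of_homogeneous hH hhom hd,
    inner_fderiv_gradient_self_of_homogeneous hH hhom hd,
    inner_gradient_self_of_homogeneous (hH z) (fun t ht => hhom t ht z)] at hcs
  have hp1 : 0 < p - 1 := by linarith
  nlinarith

theorem inner_fderiv_gradient_regularized_bounds {θ : ℝ} {z : E} (hp : 1 < p) (hθ : 0 ≤ θ)
    (hH : Differentiable ℝ H) (hhom : ∀ t > (0:ℝ), ∀ z, H (t • z) = t ^ p * H z)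
    (hd : DifferentiableAt ℝ (gradient H) z) (hs : 0 < H z)
    (hpos : ∀ u, 0 ≤ ⟪fderiv ℝ (gradient H) z u, u⟫) (v : E) :
    regularizedPowDeriv p θ (H z) * ⟪fderiv ℝ (gradient H) z v, v⟫ / p ≤
        ⟪fderiv ℝ (gradient fun w => (θ + H w ^ (2 / p)) ^ (p / 2)) z v, v⟫ ∧
      ⟪fderiv ℝ (gradient fun w => (θ + H w ^ (2 / p)) ^ (p / 2)) z v, v⟫ ≤
        p / (p - 1) * (regularizedPowDeriv p θ (H z) * ⟪fderiv ℝ (gradient H) z v, v⟫) := by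
  have hp0 : 0 < p := by linarith
  have hA : 0 < θ + H z ^ (2 / p) := by positivity
  rw [show (fun w => (θ + H w ^ (2 / p)) ^ (p / 2)) = fun w => regularizedPow p θ (H w) from rfl,
    inner_fderiv_gradient_comp
    ((lt_mem_nhds hs).mono fun s hs => hasDerivAt_regularizedPow hp0.ne' hθ hs)
    (hasDerivAt_regularizedPowDeriv hθ hs) (Eventually.of_forall hH) hd v]
  have hτ : θ / (θ + H z ^ (2 / p)) ∈ Icc (0:ℝ) 1 :=
    ⟨by positivity, div_le_one_of_le₀ (by linarith [Real.rpow_nonneg hs.le (2 / p)]) hA.le⟩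
  exact mul_add_mul_bounds hp hs (by unfold regularizedPowDeriv; positivity) hτ (hpos v)
    (sq_nonneg _) (sq_inner_gradient_le_of_homogeneous hp hH hhom hd hpos v) (by field_simp)

end Homogeneous

section Elliptic

variable {p lam Lam θ : ℝ} {H : E → ℝ} {z : E}

theorem div_rpow_mem_Icc_of_elliptic (hp : 1 < p) (hH : Differentiable ℝ H)
    (hhom : ∀ t > (0:ℝ), ∀ z, H (t • z) = t ^ p * H z) (hz : z ≠ 0)
    (hd : DifferentiableAt ℝ (gradient H) z)
    (hell : ∀ v, lam * ‖z‖ ^ (p - 2) * ‖v‖ ^ 2 ≤ ⟪fderiv ℝ (gradient H) z v, v⟫ ∧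
      ⟪fderiv ℝ (gradient H) z v, v⟫ ≤ Lam * ‖z‖ ^ (p - 2) * ‖v‖ ^ 2) :
    H z / ‖z‖ ^ p ∈ Icc (lam / (p * (p - 1))) (Lam / (p * (p - 1))) := by
  have hn : 0 < ‖z‖ := norm_pos_iff.mpr hz
  have hpp : 0 < p * (p - 1) := mul_pos (by linarith) (by linarith)
  have hzz : ⟪fderiv ℝ (gradient H) z z, z⟫ = p * (p - 1) * H z := by
    rw [inner_fderiv_gradient_self_of_homogeneous hH hhom hd,
      inner_gradient_self_of_homogeneous (hH z) (fun t ht => hhom t ht z)]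
    ring
  have hnorm : ‖z‖ ^ (p - 2) * ‖z‖ ^ 2 = ‖z‖ ^ p := by
    rw [← Real.rpow_natCast, ← Real.rpow_add hn]; norm_num
  obtain ⟨hlow, hup⟩ := hell z
  simp only [hzz, mul_assoc _ (‖z‖ ^ (p - 2)), hnorm] at hlow hup
  constructor
  · rw [div_le_div_iff₀ hpp (by positivity)]; linarith
  · rw [div_le_div_iff₀ (by positivity) hpp]; linarith

theorem inner_fderiv_gradient_regularized_bounds_of_ne_zero (hp : 1 < p) (hlam : 0 < lam)
    (hθ : 0 ≤ θ) (hH : Differentiable ℝ H) (hhom : ∀ t > (0:ℝ), ∀ z, H (t • z) = t ^ p * H z)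
    (hz : z ≠ 0) (hd : DifferentiableAt ℝ (gradient H) z)
    (hell : ∀ v, lam * ‖z‖ ^ (p - 2) * ‖v‖ ^ 2 ≤ ⟪fderiv ℝ (gradient H) z v, v⟫ ∧
      ⟪fderiv ℝ (gradient H) z v, v⟫ ≤ Lam * ‖z‖ ^ (p - 2) * ‖v‖ ^ 2)
    {μ M : ℝ} (hμM : ∀ m ∈ Icc (lam / (p * (p - 1))) (Lam / (p * (p - 1))),
      m ^ ((2 - p) / p) ∈ Icc μ M) (v : E) :
    lam * μ / p * (θ + H z ^ (2 / p)) ^ ((p - 2) / 2) * ‖v‖ ^ 2 ≤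
        ⟪fderiv ℝ (gradient fun w => (θ + H w ^ (2 / p)) ^ (p / 2)) z v, v⟫ ∧
      ⟪fderiv ℝ (gradient fun w => (θ + H w ^ (2 / p)) ^ (p / 2)) z v, v⟫ ≤
        Lam * M * p / (p - 1) * (θ + H z ^ (2 / p)) ^ ((p - 2) / 2) * ‖v‖ ^ 2 := by
  set T := fderiv ℝ (gradient H) z
  set W := (θ + H z ^ (2 / p)) ^ ((p - 2) / 2)
  have hp0 : 0 < p := by linarith
  have hp1 : 0 < p - 1 := by linarith
  have hm := div_rpow_mem_Icc_of_elliptic hp hH hhom hz hd hell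
  have hs : 0 < H z :=
    (div_pos_iff_of_pos_right (by positivity)).mp ((by positivity : (0:ℝ) < _).trans_le hm.1)
  have hLam : 0 < Lam := by
    have := hm.1.trans hm.2
    rw [div_le_div_iff_of_pos_right (by positivity)] at this
    linarith
  have hpos : ∀ u, 0 ≤ ⟪T u, u⟫ := fun u => le_trans (by positivity) (hell u).1
  obtain ⟨hQlow, hQup⟩ := inner_fderiv_gradient_regularized_bounds hp hθ hH hhom hd hs hpos v
  have hratio : regularizedPowDeriv p θ (H z) * ‖z‖ ^ (p - 2) =
      W * (H z / ‖z‖ ^ p) ^ ((2 - p) / p) :=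
    regularizedPowDeriv_mul_rpow hp0.ne' hs (norm_pos_iff.mpr hz)
  have hf' : 0 ≤ regularizedPowDeriv p θ (H z) := by unfold regularizedPowDeriv; positivity
  obtain ⟨hμ, hM⟩ := hμM _ hm
  have hW : 0 ≤ W := by positivity
  constructor
  · calc lam * μ / p * W * ‖v‖ ^ 2
        ≤ lam * (H z / ‖z‖ ^ p) ^ ((2 - p) / p) / p * W * ‖v‖ ^ 2 := by gcongr
      _ = regularizedPowDeriv p θ (H z) * (lam * ‖z‖ ^ (p - 2) * ‖v‖ ^ 2) / p := by
          linear_combination (-(lam * ‖v‖ ^ 2 / p)) * hratio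
      _ ≤ regularizedPowDeriv p θ (H z) * ⟪T v, v⟫ / p := by gcongr; exact (hell v).1
      _ ≤ _ := hQlow
  · calc _ ≤ p / (p - 1) * (regularizedPowDeriv p θ (H z) * ⟪T v, v⟫) := hQup
      _ ≤ p / (p - 1) * (regularizedPowDeriv p θ (H z) * (Lam * ‖z‖ ^ (p - 2) * ‖v‖ ^ 2)) := by
          gcongr; exact (hell v).2
      _ = Lam * (H z / ‖z‖ ^ p) ^ ((2 - p) / p) * p / (p - 1) * W * ‖v‖ ^ 2 := by
          linear_combination p / (p - 1) * Lam * ‖v‖ ^ 2 * hratio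
      _ ≤ Lam * M * p / (p - 1) * W * ‖v‖ ^ 2 := by gcongr

end Elliptic

theorem stmt_8_general (N : ℕ) (p lam Lam : ℝ) (hp : 1 < p)
    (hlam : 0 < lam) (hLam : lam ≤ Lam)
    (H : EuclideanSpace ℝ (Fin N) → ℝ)
    (hC1 : ContDiff ℝ 1 H)
    (hhom : ∀ t > (0:ℝ), ∀ z, H (t • z) = t ^ p * H z)
    (hd2 : ∀ z : EuclideanSpace ℝ (Fin N), z ≠ 0 →
      DifferentiableAt ℝ (gradient H) z)
    (hell : ∀ z : EuclideanSpace ℝ (Fin N), z ≠ 0 → ∀ v,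
      lam * ‖z‖ ^ (p - 2) * ‖v‖ ^ 2 ≤ (inner ℝ (fderiv ℝ (gradient H) z v) v : ℝ) ∧
      (inner ℝ (fderiv ℝ (gradient H) z v) v : ℝ) ≤ Lam * ‖z‖ ^ (p - 2) * ‖v‖ ^ 2)
    (hdθ : ∀ θ > (0:ℝ), ∀ z : EuclideanSpace ℝ (Fin N),
      DifferentiableAt ℝ (gradient (fun w => (θ + H w ^ (2 / p)) ^ (p / 2))) z) :
    ∃ lt Lt : ℝ, 0 < lt ∧ lt ≤ Lt ∧
      ∀ θ > (0:ℝ), ∀ z : EuclideanSpace ℝ (Fin N), ∀ v,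
        lt * (θ + H z ^ (2 / p)) ^ ((p - 2) / 2) * ‖v‖ ^ 2 ≤
          (inner ℝ (fderiv ℝ (gradient (fun w => (θ + H w ^ (2 / p)) ^ (p / 2))) z v) v : ℝ) ∧
        (inner ℝ (fderiv ℝ (gradient (fun w => (θ + H w ^ (2 / p)) ^ (p / 2))) z v) v : ℝ) ≤
          Lt * (θ + H z ^ (2 / p)) ^ ((p - 2) / 2) * ‖v‖ ^ 2 := by
  have hp0 : 0 < p := by linarith
  have hp1 : 0 < p - 1 := by linarith
  have hLam0 : 0 < Lam := hlam.trans_le hLam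
  have hH : Differentiable ℝ H := hC1.differentiable one_ne_zero
  set μ := min ((lam / (p * (p - 1))) ^ ((2 - p) / p)) ((Lam / (p * (p - 1))) ^ ((2 - p) / p))
  set M := max ((lam / (p * (p - 1))) ^ ((2 - p) / p)) ((Lam / (p * (p - 1))) ^ ((2 - p) / p))
  have hμ : 0 < μ := lt_min (by positivity) (by positivity)
  refine ⟨lam * μ / p, Lam * M * p / (p - 1), by positivity, ?_, fun θ hθ z v => ?_⟩
  · calc lam * μ / p ≤ Lam * M / p := by gcongr; exact min_le_max
      _ ≤ Lam * M * p / (p - 1) := by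
        rw [div_le_div_iff₀ hp0 hp1]
        have : 0 < Lam * M := mul_pos hLam0 (hμ.trans_le min_le_max)
        nlinarith [mul_le_mul_of_nonneg_left (show p - 1 ≤ p * p by nlinarith) this.le]
  have hbound := fun (y : EuclideanSpace ℝ (Fin N)) (hy : y ≠ 0) =>
    inner_fderiv_gradient_regularized_bounds_of_ne_zero hp hlam hθ.le hH hhom hy (hd2 y hy)
      (hell y hy) (μ := μ) (M := M) (fun m hm => rpow_mem_uIcc_of_mem_Icc (by positivity) hm _) v
  rcases eq_or_ne z 0 with rfl | hz
  · rcases eq_or_ne v 0 with rfl | hv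
    · simp
    have hW := continuousAt_zero_rpow_add_rpow_of_homogeneous ((p - 2) / 2) hp0 hθ hH.continuous hhom
    exact inner_fderiv_bounds_of_forall_ne (hdθ θ hθ) hv
      ((hW.const_mul _).mul_const _) ((hW.const_mul _).mul_const _) hbound
  · exact hbound z hz

theorem stmt_8 (N : ℕ) (hN : 1 ≤ N) (p lam Lam : ℝ) (hp : 1 < p)
    (hlam : 0 < lam) (hLam : lam ≤ Lam)
    (H : EuclideanSpace ℝ (Fin N) → ℝ)
    (hnn : ∀ z, 0 ≤ H z) (hzero : ∀ z, H z = 0 ↔ z = 0)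
    (hC1 : ContDiff ℝ 1 H)
    (hhom : ∀ t > (0:ℝ), ∀ z, H (t • z) = t ^ p * H z)
    (hd2 : ∀ z : EuclideanSpace ℝ (Fin N), z ≠ 0 →
      DifferentiableAt ℝ (gradient H) z)
    (hell : ∀ z : EuclideanSpace ℝ (Fin N), z ≠ 0 → ∀ v,
      lam * ‖z‖ ^ (p - 2) * ‖v‖ ^ 2 ≤ (inner ℝ (fderiv ℝ (gradient H) z v) v : ℝ) ∧
      (inner ℝ (fderiv ℝ (gradient H) z v) v : ℝ) ≤ Lam * ‖z‖ ^ (p - 2) * ‖v‖ ^ 2)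
    (hdθ : ∀ θ > (0:ℝ), ∀ z : EuclideanSpace ℝ (Fin N),
      DifferentiableAt ℝ (gradient (fun w => (θ + H w ^ (2 / p)) ^ (p / 2))) z) :
    ∃ lt Lt : ℝ, 0 < lt ∧ lt ≤ Lt ∧
      ∀ θ > (0:ℝ), ∀ z : EuclideanSpace ℝ (Fin N), ∀ v,
        lt * (θ + H z ^ (2 / p)) ^ ((p - 2) / 2) * ‖v‖ ^ 2 ≤
          (inner ℝ (fderiv ℝ (gradient (fun w => (θ + H w ^ (2 / p)) ^ (p / 2))) z v) v : ℝ) ∧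
        (inner ℝ (fderiv ℝ (gradient (fun w => (θ + H w ^ (2 / p)) ^ (p / 2))) z v) v : ℝ) ≤
          Lt * (θ + H z ^ (2 / p)) ^ ((p - 2) / 2) * ‖v‖ ^ 2 :=
  stmt_8_general N p lam Lam hp hlam hLam H hC1 hhom hd2 hell hdθ
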